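/- Let k be a field, n ≥ 1, a_0, …, a_{n−1} ∈ k with a_0 ≠ 0, and L(y) = ∂ⁿ(y) + Σ_{i=0}^{n−1} a_i·∂ⁱ(y). Let y_1, …, y_n ∈ Hk be k-linearly independent solutions of L(y) = 0, let V = Span_k{y_1,…,y_n} (the full solution space of L in Hk), and let B ∈ M(n,k) satisfy ∂(y_j) = Σ_i y_i·B_{ij}. Then the map sending σ ∈ G(V|k) to the matrix C_σ with σ(y_j) = Σ_i (C_σ)_{ij}·y_i is a group isomorphism from G(V|k) onto C_k(B), and moreover C_k(B) = GL(n,k) ∩ Span_k{I, B, B², …, B^{n−1}}. -/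

import Mathlib

/-!
With respect to the basis `y` of `V`, `σ ↦ C_σ` is the matrix of `σ`, so it is injective and
multiplicative, and `σ` commutes with `∂` exactly when `C_σ` commutes with the matrix `B` of
`∂|_V`. For the second claim, `∂|_V` is cyclic: every element of `V` satisfies the order-`n`
recurrence, hence is determined by its first `n` terms, so `V` contains a `u` whose first `n`
terms are `0, …, 0, 1`. The first `n` terms of `u, ∂u, …, ∂ⁿ⁻¹u` form a Hankel matrix that is
triangular after reversing its columns, so these vectors are a basis of `V`. An endomorphism
commuting with `∂|_V` is then determined by its value at `u`, which makes it a polynomial of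
degree `< n` in `∂|_V`.
-/

open scoped BigOperators

set_option linter.unusedSectionVars false

/-- The ring of Hurwitz series over `R`: all sequences `ℕ → R`, with termwise addition and
the Hurwitz (binomial-convolution) product. -/
def HS (R : Type*) : Type _ := ℕ → R

namespace HS

variable {R : Type*} [CommRing R]

instance : AddCommGroup (HS R) := Pi.addCommGroup

instance {S : Type*} [Semiring S] [Module S R] : Module S (HS R) :=
  Pi.module ℕ (fun _ => R) S

@[simp] theorem add_apply (a b : HS R) (n : ℕ) : (a + b) n = a n + b n := rfl
@[simp] theorem zero_apply (n : ℕ) : (0 : HS R) n = 0 := rfl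
@[simp] theorem smul_apply {S : Type*} [Semiring S] [Module S R] (c : S) (a : HS R) (n : ℕ) :
    (c • a) n = c • a n := rfl

instance : Mul (HS R) :=
  ⟨fun a b n => ∑ j ∈ Finset.range (n + 1), (n.choose j : R) * a j * b (n - j)⟩

theorem mul_apply (a b : HS R) (n : ℕ) :
    (a * b) n = ∑ j ∈ Finset.range (n + 1), (n.choose j : R) * a j * b (n - j) := rfl

instance : One (HS R) := ⟨fun n => if n = 0 then 1 else 0⟩

theorem one_apply (n : ℕ) : (1 : HS R) n = if n = 0 then 1 else 0 := rfl

private theorem hmul_comm (a b : HS R) : a * b = b * a := by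
  funext n
  rw [mul_apply, mul_apply, ← Finset.sum_range_reflect]
  refine Finset.sum_congr rfl fun j hj => ?_
  have hj' : j ≤ n := Nat.lt_succ_iff.mp (Finset.mem_range.mp hj)
  have h1 : n + 1 - 1 - j = n - j := by omega
  rw [h1, Nat.choose_symm hj', Nat.sub_sub_self hj']
  ring

private theorem hone_mul (a : HS R) : 1 * a = a := by
  funext n
  rw [mul_apply]
  rw [Finset.sum_eq_single 0]
  · simp [one_apply]
  · intro j hj hj0
    simp [one_apply, hj0]
  · intro h
    exact absurd (Finset.mem_range.mpr (Nat.succ_pos n)) h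

private theorem hmul_assoc (a b c : HS R) : a * b * c = a * (b * c) := by
  funext n
  rw [mul_apply, mul_apply]
  simp_rw [mul_apply, Finset.mul_sum]
  simp_rw [Finset.sum_mul]
  rw [Finset.sum_sigma', Finset.sum_sigma']
  refine Finset.sum_nbij' (fun x => ⟨x.2, x.1 - x.2⟩) (fun x => ⟨x.1 + x.2, x.1⟩)
    ?_ ?_ ?_ ?_ ?_
  · rintro ⟨p, i⟩ h
    simp only [Finset.mem_sigma, Finset.mem_range] at h ⊢
    omega
  · rintro ⟨i, j⟩ h
    simp only [Finset.mem_sigma, Finset.mem_range] at h ⊢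
    omega
  · rintro ⟨p, i⟩ h
    simp only [Finset.mem_sigma, Finset.mem_range] at h
    dsimp only
    exact congrArg (fun m => (⟨m, i⟩ : Σ _ : ℕ, ℕ)) (by omega)
  · rintro ⟨i, j⟩ h
    simp only [Finset.mem_sigma, Finset.mem_range] at h
    dsimp only
    exact congrArg (fun m => (⟨i, m⟩ : Σ _ : ℕ, ℕ)) (by omega)
  · rintro ⟨p, i⟩ h
    simp only [Finset.mem_sigma, Finset.mem_range] at h
    have hip : i ≤ p := by omega
    have hpn : p ≤ n := by omega
    have h2 : n - i - (p - i) = n - p := by omega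
    have h3 : (n.choose p : R) * (p.choose i : R)
        = (n.choose i : R) * ((n - i).choose (p - i) : R) := by
      rw [← Nat.cast_mul, ← Nat.cast_mul, Nat.choose_mul hip]
    simp only [h2]
    calc ((n.choose p : R) * ((p.choose i : R) * a i * b (p - i)) * c (n - p))
        = ((n.choose p : R) * (p.choose i : R)) * (a i * b (p - i) * c (n - p)) := by ring
      _ = ((n.choose i : R) * ((n - i).choose (p - i) : R)) * (a i * b (p - i) * c (n - p)) := by
          rw [h3]
      _ = (n.choose i : R) * a i * (((n - i).choose (p - i) : R) * b (p - i) * c (n - p)) := by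
          ring

instance : CommRing (HS R) :=
  { (inferInstance : AddCommGroup (HS R)) with
    mul := (· * ·)
    one := (1 : HS R)
    mul_assoc := hmul_assoc
    one_mul := hone_mul
    mul_one := fun a => by rw [hmul_comm]; exact hone_mul a
    left_distrib := fun a b c => by
      funext n
      simp only [mul_apply, add_apply]
      rw [← Finset.sum_add_distrib]
      exact Finset.sum_congr rfl fun j _ => by ring
    right_distrib := fun a b c => by
      funext n
      simp only [mul_apply, add_apply]
      rw [← Finset.sum_add_distrib]
      exact Finset.sum_congr rfl fun j _ => by ring
    zero_mul := fun a => by funext n; simp [mul_apply]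
    mul_zero := fun a => by funext n; simp [mul_apply]
    mul_comm := hmul_comm }

/-- The derivation `∂` on Hurwitz series: the left-shift. -/
def D (a : HS R) : HS R := fun n => a (n + 1)

@[simp] theorem D_apply (a : HS R) (n : ℕ) : D a n = a (n + 1) := rfl

/-- The exponential `exp β = (1, β, β², …)`. -/
def hexp (b : R) : HS R := fun n => b ^ n

@[simp] theorem hexp_apply (b : R) (n : ℕ) : hexp b n = b ^ n := rfl

/-- The divided power `x^{[i]}`: the sequence with `1` in position `i` and `0` elsewhere. -/
def dpow (i : ℕ) : HS R := fun n => if n = i then 1 else 0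

/-- The constant Hurwitz series `(r, 0, 0, …)`. -/
def const (r : R) : HS R := fun n => if n = 0 then r else 0

/-- Entrywise map of a Hurwitz series along a map of coefficients. -/
def map {K L : Type*} (f : K → L) (a : HS K) : HS L := fun n => f (a n)

/-- `σ` is a differential automorphism of the subspace `V` of `HS k`:
a `k`-linear automorphism of `V` commuting with the derivation `D`. -/
def IsDiffAut {k : Type*} [Field k] (V : Submodule k (HS k)) (σ : V ≃ₗ[k] V) : Prop :=
  ∀ v w : V, (w : HS k) = D (v : HS k) → (σ w : HS k) = D (σ v : HS k)

end HS

/-- The nilpotent upper Jordan block of size `m` (ones on the superdiagonal). -/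
def jordanBlock (k : Type*) [Field k] (m : ℕ) : Matrix (Fin m) (Fin m) k :=
  Matrix.of fun i j => if (i : ℕ) + 1 = (j : ℕ) then 1 else 0

/-- The centralizer of a matrix `A` inside `GL(m, k)`, as a set of matrices. -/
def matCent {k : Type*} [Field k] {m : ℕ} (A : Matrix (Fin m) (Fin m) k) :
    Set (Matrix (Fin m) (Fin m) k) :=
  {T | IsUnit T ∧ A * T = T * A}

/-- The group `U(m, k)` of upper triangular matrices in `GL(m, k)` with all diagonal
entries equal to `1`, as a set of matrices. -/
def uniUpper (k : Type*) [Field k] (m : ℕ) : Set (Matrix (Fin m) (Fin m) k) :=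
  {T | IsUnit T ∧ (∀ i, T i i = 1) ∧ ∀ i j : Fin m, (j : ℕ) < (i : ℕ) → T i j = 0}


open Module

theorem Matrix.det_hankel_ne_zero {R : Type*} [CommRing R] [IsDomain R] {n : ℕ} (u : ℕ → R)
    (h0 : ∀ m < n - 1, u m = 0) (h1 : u (n - 1) ≠ 0) :
    (Matrix.of fun i j : Fin n => u (i + j)).det ≠ 0 := by
  set M := of fun i j : Fin n => u (i + j)
  have hlow : (M.submatrix id Fin.revPerm).IsLowerTriangular := by
    intro i j hij
    replace hij : i < j := hij
    simp only [submatrix_apply, id, Fin.revPerm_apply, M, of_apply, Fin.val_rev]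
    exact h0 _ (by omega)
  have hdet := det_permute' Fin.revPerm M
  rw [det_of_isLowerTriangular _ hlow] at hdet
  intro hM
  rw [hM, mul_zero] at hdet
  refine Finset.prod_ne_zero_iff.mpr (fun i _ => ?_) hdet
  simp only [submatrix_apply, id, Fin.revPerm_apply, M, of_apply, Fin.val_rev]
  rwa [show (i : ℕ) + (n - (i + 1)) = n - 1 by omega]

theorem Module.End.exists_eq_sum_smul_pow_of_commute {R M : Type*} [CommRing R]
    [AddCommGroup M] [Module R M] {n : ℕ} {f g : Module.End R M} {u : M}
    (b : Basis (Fin n) R M) (hb : ∀ i, b i = (f ^ (i : ℕ)) u) (hgf : Commute g f) :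
    ∃ c : Fin n → R, g = ∑ i, c i • f ^ (i : ℕ) := by
  set c := b.repr (g u)
  have hgu : g u = ∑ i, c i • (f ^ (i : ℕ)) u := by
    simpa only [hb] using (b.sum_repr (g u)).symm
  refine ⟨c, b.ext fun j => ?_⟩
  rw [hb, ← Module.End.mul_apply, (hgf.pow_right _).eq, Module.End.mul_apply, hgu, map_sum]
  simp only [LinearMap.sum_apply, LinearMap.smul_apply, map_smul, ← Module.End.mul_apply,
    ← pow_add, add_comm]

theorem LinearMap.exists_linearEquiv_toMatrixAlgEquiv_eq_iff {R M ι : Type*} [CommRing R]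
    [AddCommGroup M] [Module R M] [Fintype ι] [DecidableEq ι] (b : Basis ι R M)
    (f : Module.End R M) (T : Matrix ι ι R) :
    (∃ σ : M ≃ₗ[R] M, Commute (σ : Module.End R M) f ∧ toMatrixAlgEquiv b σ = T) ↔
      IsUnit T ∧ Commute (toMatrixAlgEquiv b f) T := by
  constructor
  · rintro ⟨σ, hσf, rfl⟩
    exact ⟨(isUnit_map_iff _ _).mpr ((Module.End.isUnit_iff _).mpr σ.bijective),
      (hσf.map (toMatrixAlgEquiv b)).symm⟩
  · rintro ⟨hT, hfT⟩
    refine ⟨Matrix.toLinearEquiv b T (T.isUnit_iff_isUnit_det.mp hT), ?_,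
      (toMatrixAlgEquiv b).apply_symm_apply T⟩
    have := (hfT.map (toMatrixAlgEquiv b).symm).symm
    rwa [AlgEquiv.symm_apply_apply] at this

theorem LinearMap.sum_toMatrixAlgEquiv_smul {R M ι : Type*} [CommRing R] [AddCommGroup M]
    [Module R M] [Fintype ι] [DecidableEq ι] (b : Basis ι R M) (f : Module.End R M) (j : ι) :
    ∑ i, toMatrixAlgEquiv b f i j • b i = f (b j) := by
  simp [toMatrixAlgEquiv_apply, b.sum_repr]

theorem matCent_toMatrixAlgEquiv_eq_of_linearIndependent {k M : Type*} [Field k]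
    [AddCommGroup M] [Module k M] {m : ℕ} (b : Basis (Fin m) k M) {f : Module.End k M} {u : M}
    (hu : LinearIndependent k fun i : Fin m => (f ^ (i : ℕ)) u) :
    matCent (LinearMap.toMatrixAlgEquiv b f) = {T | IsUnit T ∧ T ∈ Submodule.span k
      (Set.range fun i : Fin m => LinearMap.toMatrixAlgEquiv b f ^ (i : ℕ))} := by
  have := Module.Finite.of_basis b
  let bu := basisOfLinearIndependentOfCardEqFinrank' _ hu (by simp [finrank_eq_card_basis b])
  ext T
  simp only [matCent, Set.mem_ofPred_eq, Submodule.mem_span_range_iff_exists_fun]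
  refine and_congr_right fun _ => ⟨fun hfT => ?_, ?_⟩
  · have hTf := (Commute.map hfT (LinearMap.toMatrixAlgEquiv b).symm).symm
    rw [AlgEquiv.symm_apply_apply] at hTf
    obtain ⟨c, hc⟩ := Module.End.exists_eq_sum_smul_pow_of_commute (u := u) bu (by simp [bu]) hTf
    refine ⟨c, ?_⟩
    simpa using (congrArg (LinearMap.toMatrixAlgEquiv b) hc).symm
  · rintro ⟨c, rfl⟩
    exact Commute.sum_right _ _ _ fun i _ => (Commute.self_pow _ _).smul_right _

namespace HS

variable {R : Type*} [CommRing R]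

def Dₗ : HS R →ₗ[R] HS R where
  toFun := D
  map_add' _ _ := rfl
  map_smul' _ _ := rfl

theorem ext_iff {a b : HS R} : a = b ↔ ∀ n, a n = b n := funext_iff

@[simp] theorem Dₗ_apply (v : HS R) : Dₗ v = D v := rfl

theorem iterate_D_apply (i : ℕ) (v : HS R) (j : ℕ) : (D^[i] v) j = v (j + i) := by
  induction i generalizing v with
  | zero => rfl
  | succ i ih => rw [Function.iterate_succ_apply, ih]; rfl

theorem sum_apply {ι : Type*} (s : Finset ι) (f : ι → HS R) (m : ℕ) :
    (∑ i ∈ s, f i) m = ∑ i ∈ s, f i m :=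
  Finset.sum_apply m s f

theorem const_mul (c : R) (x : HS R) : const c * x = c • x := by
  funext m
  rw [mul_apply, Finset.sum_eq_single_of_mem 0 (by simp) fun j _ hj => by simp [const, hj]]
  simp [const]

theorem iterate_D_add_sum_const_mul_eq_zero_iff {n : ℕ} (a : Fin n → R) (h : HS R) :
    D^[n] h + ∑ i : Fin n, const (a i) * D^[(i : ℕ)] h = 0 ↔
      ∀ j, h (j + n) + ∑ i : Fin n, a i * h (j + i) = 0 := by
  simp only [ext_iff, add_apply, zero_apply, sum_apply, const_mul, smul_apply,
    iterate_D_apply, smul_eq_mul]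

theorem eq_zero_of_recurrence {n : ℕ} {a : Fin n → R} {h : HS R}
    (hrec : ∀ j, h (j + n) + ∑ i : Fin n, a i * h (j + i) = 0) (h0 : ∀ j < n, h j = 0) :
    h = 0 := by
  refine ext_iff.mpr fun m => ?_
  induction m using Nat.strong_induction_on with
  | _ m ih =>
    rcases lt_or_ge m n with hm | hm
    · exact h0 m hm
    · obtain ⟨j, rfl⟩ := Nat.exists_eq_add_of_le' hm
      have hj := hrec j
      rwa [Finset.sum_eq_zero fun i _ => by rw [ih _ (by omega), zero_apply, mul_zero],
        add_zero] at hj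

def truncₗ (n : ℕ) : HS R →ₗ[R] (Fin n → R) where
  toFun v j := v j
  map_add' _ _ := rfl
  map_smul' _ _ := rfl

@[simp] theorem truncₗ_apply (n : ℕ) (v : HS R) (j : Fin n) : truncₗ n v j = v j := rfl

variable {k : Type*} [Field k] {ι : Type*} [Fintype ι] {y : ι → HS k}
  {B : Matrix ι ι k}

theorem Dₗ_mem_span_range (hB : ∀ j, D (y j) = ∑ i, B i j • y i) :
    ∀ v ∈ Submodule.span k (Set.range y), Dₗ v ∈ Submodule.span k (Set.range y) := by
  suffices Submodule.span k (Set.range y) ≤ (Submodule.span k (Set.range y)).comap Dₗ from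
    fun v hv => this hv
  refine Submodule.span_le.mpr (Set.range_subset_iff.mpr fun j => ?_)
  rw [SetLike.mem_coe, Submodule.mem_comap, Dₗ_apply, hB]
  exact Submodule.sum_mem _ fun i _ =>
    Submodule.smul_mem _ _ (Submodule.subset_span (Set.mem_range_self i))

theorem toMatrixAlgEquiv_restrict_Dₗ [DecidableEq ι] (hind : LinearIndependent k y)
    (hB : ∀ j, D (y j) = ∑ i, B i j • y i) (hD : ∀ v ∈ Submodule.span k (Set.range y),
      Dₗ v ∈ Submodule.span k (Set.range y)) :
    LinearMap.toMatrixAlgEquiv (Basis.span hind) (Dₗ.restrict hD) = B := by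
  rw [← (LinearMap.toMatrixAlgEquiv (Basis.span hind)).apply_symm_apply B]
  congr 1
  refine (Basis.span hind).ext fun j => Subtype.ext ?_
  rw [LinearMap.toMatrixAlgEquiv_symm, Matrix.toLinAlgEquiv_self]
  simp [Basis.span_apply, hB]

theorem exists_mem_linearIndependent_iterate_D {n : ℕ} {a : Fin n → k}
    {V : Submodule k (HS k)} (hrec : ∀ v ∈ V, ∀ j, v (j + n) + ∑ i : Fin n, a i * v (j + i) = 0)
    (hdim : finrank k V = n) :
    ∃ u ∈ V, LinearIndependent k fun i : Fin n => D^[i] u := by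
  rcases Nat.eq_zero_or_pos n with rfl | hn
  · exact ⟨0, V.zero_mem, linearIndependent_empty_type⟩
  let ev := (truncₗ n).comp V.subtype
  have hinj : Function.Injective ev := by
    refine (injective_iff_map_eq_zero ev).mpr fun v hv => Subtype.ext ?_
    exact eq_zero_of_recurrence (hrec v v.2) fun j hj => congrFun hv ⟨j, hj⟩
  have := Module.Finite.of_injective ev hinj
  have hsurj : Function.Surjective ev :=
    (LinearMap.injective_iff_surjective_of_finrank_eq_finrank (by simp [hdim])).mp hinj
  obtain ⟨⟨u, hu⟩, hu1⟩ := hsurj fun j => if (j : ℕ) = n - 1 then 1 else 0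
  have hu_init (m : ℕ) (hm : m < n) : u m = if m = n - 1 then 1 else 0 :=
    congrFun hu1 ⟨m, hm⟩
  have hdet := Matrix.det_hankel_ne_zero (n := n) u
    (fun m hm => by simp [hu_init m (by omega), hm.ne]) (by simp [hu_init (n - 1) (by omega)])
  refine ⟨u, hu, LinearIndependent.of_comp (truncₗ n) ?_⟩
  have hrows :
      (truncₗ n ∘ fun i : Fin n => D^[i] u) = Matrix.of fun i j : Fin n => u (i + j) := by
    ext i j
    simp [iterate_D_apply, add_comm]
  rw [hrows]
  exact Matrix.linearIndependent_rows_of_det_ne_zero hdet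

theorem exists_linearIndependent_pow_restrict_Dₗ {n : ℕ} {a : Fin n → k}
    {V : Submodule k (HS k)} (hD : ∀ v ∈ V, Dₗ v ∈ V)
    (hrec : ∀ v ∈ V, ∀ j, v (j + n) + ∑ i : Fin n, a i * v (j + i) = 0)
    (hdim : finrank k V = n) :
    ∃ u : V, LinearIndependent k fun i : Fin n => ((Dₗ.restrict hD) ^ (i : ℕ)) u := by
  obtain ⟨u, hu, hli⟩ := exists_mem_linearIndependent_iterate_D hrec hdim
  refine ⟨⟨u, hu⟩, LinearIndependent.of_comp V.subtype ?_⟩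
  convert hli with i
  rw [Function.comp_apply, Module.End.pow_restrict, Submodule.subtype_apply,
    LinearMap.coe_restrict_apply, Module.End.pow_apply]
  rfl

theorem isDiffAut_iff_commute {V : Submodule k (HS k)} (hV : ∀ v ∈ V, Dₗ v ∈ V)
    (σ : V ≃ₗ[k] V) : IsDiffAut V σ ↔ Commute (σ : Module.End k V) (Dₗ.restrict hV) := by
  constructor
  · intro h
    ext v
    exact h v _ rfl
  · intro h v w hw
    obtain rfl : w = Dₗ.restrict hV v := Subtype.ext hw
    exact congrArg Subtype.val (LinearMap.congr_fun h v)

end HS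

theorem stmt_15_general {k : Type*} [Field k] (n : ℕ) (a : Fin n → k)
    (y : Fin n → HS k)
    (hind : LinearIndependent k y)
    (V : Submodule k (HS k)) (hV : V = Submodule.span k (Set.range y))
    (hfull : (V : Set (HS k)) =
      {h : HS k | HS.D^[n] h + ∑ i : Fin n, HS.const (a i) * HS.D^[(i : ℕ)] h = 0})
    (hmem : ∀ j, y j ∈ V)
    (B : Matrix (Fin n) (Fin n) k)
    (hB : ∀ j, HS.D (y j) = ∑ i, B i j • y i) :
    (∃ C : {σ : V ≃ₗ[k] V // HS.IsDiffAut V σ} → Matrix (Fin n) (Fin n) k,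
      (∀ σ j, ((σ.1 ⟨y j, hmem j⟩ : V) : HS k) = ∑ i, C σ i j • y i) ∧
      Function.Injective C ∧
      (∀ σ τ ρ, (∀ v : V, ρ.1 v = σ.1 (τ.1 v)) → C ρ = C σ * C τ) ∧
      Set.range C = matCent B) ∧
    matCent B = {T : Matrix (Fin n) (Fin n) k | IsUnit T ∧
      T ∈ Submodule.span k (Set.range fun i : Fin n => B ^ (i : ℕ))} := by
  subst hV
  have hD := HS.Dₗ_mem_span_range hB
  let b := Basis.span hind
  have hdB : LinearMap.toMatrixAlgEquiv b (HS.Dₗ.restrict hD) = B :=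
    HS.toMatrixAlgEquiv_restrict_Dₗ hind hB hD
  have hrec : ∀ v ∈ Submodule.span k (Set.range y), ∀ j,
      v (j + n) + ∑ i : Fin n, a i * v (j + i) = 0 := fun v hv =>
    (HS.iterate_D_add_sum_const_mul_eq_zero_iff a v).mp ((Set.ext_iff.mp hfull v).mp hv)
  obtain ⟨u, hcyc⟩ := HS.exists_linearIndependent_pow_restrict_Dₗ hD hrec
    ((finrank_eq_card_basis b).trans (Fintype.card_fin n))
  refine ⟨⟨fun σ => LinearMap.toMatrixAlgEquiv b σ.1, fun σ j => ?_, fun σ τ h => ?_,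
    fun σ τ ρ h => ?_, ?_⟩, hdB ▸ matCent_toMatrixAlgEquiv_eq_of_linearIndependent b hcyc⟩
  · have := congrArg Subtype.val (LinearMap.sum_toMatrixAlgEquiv_smul b σ.1 j)
    simpa [b, Basis.span_apply] using this.symm
  · exact Subtype.ext (LinearEquiv.toLinearMap_injective
      ((LinearMap.toMatrixAlgEquiv b).injective h))
  · have hρ : (ρ.1 : Module.End k (Submodule.span k (Set.range y))) = σ.1 * τ.1 :=
      LinearMap.ext h
    simp only [hρ, map_mul]
  · ext T
    change _ ↔ IsUnit T ∧ Commute B T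
    rw [← hdB, ← LinearMap.exists_linearEquiv_toMatrixAlgEquiv_eq_iff]
    simp only [Set.mem_range, Subtype.exists, exists_prop]
    exact exists_congr fun σ => and_congr_left' (HS.isDiffAut_iff_commute hD σ)

/-- if `a₀ ≠ 0`, the map `σ ↦ C_σ` is a group isomorphism from `G(V|k)` onto
`C_k(B)`, and `C_k(B) = GL(n,k) ∩ Span_k{I, B, …, B^{n-1}}`. -/
theorem stmt_15 {k : Type*} [Field k] (n : ℕ) (hn : 0 < n) (a : Fin n → k)
    (ha : a ⟨0, hn⟩ ≠ 0)
    (y : Fin n → HS k)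
    (hsol : ∀ j, HS.D^[n] (y j) + ∑ i : Fin n, HS.const (a i) * HS.D^[(i : ℕ)] (y j) = 0)
    (hind : LinearIndependent k y)
    (V : Submodule k (HS k)) (hV : V = Submodule.span k (Set.range y))
    (hfull : (V : Set (HS k)) =
      {h : HS k | HS.D^[n] h + ∑ i : Fin n, HS.const (a i) * HS.D^[(i : ℕ)] h = 0})
    (hmem : ∀ j, y j ∈ V)
    (B : Matrix (Fin n) (Fin n) k)
    (hB : ∀ j, HS.D (y j) = ∑ i, B i j • y i) :
    (∃ C : {σ : V ≃ₗ[k] V // HS.IsDiffAut V σ} → Matrix (Fin n) (Fin n) k,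
      (∀ σ j, ((σ.1 ⟨y j, hmem j⟩ : V) : HS k) = ∑ i, C σ i j • y i) ∧
      Function.Injective C ∧
      (∀ σ τ ρ, (∀ v : V, ρ.1 v = σ.1 (τ.1 v)) → C ρ = C σ * C τ) ∧
      Set.range C = matCent B) ∧
    matCent B = {T : Matrix (Fin n) (Fin n) k | IsUnit T ∧
      T ∈ Submodule.span k (Set.range fun i : Fin n => B ^ (i : ℕ))} :=
  stmt_15_general n a y hind V hV hfull hmem B hB
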